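/- arXiv:2409.00881 — 4 statements merged into one kernel-verified Lean document; each statement's English description precedes it below -/
import Mathlib

section
/- Let E be an elliptic curve over ℚ, let n ≥ 2, and let k ∈ {1, 2, 3, 4}. If 2^k divides the field extension degree [ℚ(E[2^{n+1}]) : ℚ(E[2^n])], then 2^k divides [ℚ(E[2^{n+2}]) : ℚ(E[2^{n+1}])]. -/
/-!
Division fields of elliptic curves over `ℚ`, inside a fixed algebraic closure `Qbar` of `ℚ`.
An elliptic curve over `ℚ` is a Weierstrass curve `W : WeierstrassCurve ℚ` satisfying
`W.IsElliptic` (i.e. with nonvanishing discriminant).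
-/

open WeierstrassCurve IntermediateField

noncomputable section

/-- A fixed algebraic closure of `ℚ`. -/
abbrev Qbar : Type := AlgebraicClosure ℚ

open Classical in
/-- The `m`-division field `ℚ(E[m])` of a Weierstrass (elliptic) curve over `ℚ`: the subfield
of the fixed algebraic closure of `ℚ` generated over `ℚ` by the `x`- and `y`-coordinates of
the `m`-torsion points of the curve over `Qbar`. -/
def divisionField (W : WeierstrassCurve ℚ) (m : ℕ) : IntermediateField ℚ Qbar :=
  IntermediateField.adjoin ℚ
    {c : Qbar | ∃ (x y : Qbar) (h : (W.baseChange Qbar).toAffine.Nonsingular x y),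
      m • (WeierstrassCurve.Affine.Point.some x y h) = 0 ∧ (c = x ∨ c = y)}

/-- The Galois group `Gal(ℚ(E[m])/ℚ)` of the `m`-division field of `W` over `ℚ`. -/
abbrev divGal (W : WeierstrassCurve ℚ) (m : ℕ) : Type :=
  ↥(divisionField W m) ≃ₐ[ℚ] ↥(divisionField W m)

end

/-!
Let `H m` be the subgroup of `Gal(ℚ̄/ℚ)` fixing `ℚ(E[m])`, so that the relative degrees in
question are the indices `[H 2ⁿ : H 2ⁿ⁺¹]` and `[H 2ⁿ⁺¹ : H 2ⁿ⁺²]`. For `σ ∈ H 2ⁿ` and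
`P ∈ E[2ⁿ⁺²]`, the difference `σ P - P` lies in `E[4] ⊆ E[2ⁿ]` and is therefore fixed by `H 2ⁿ`.
Hence `H 2ⁿ` is abelian modulo `H 2ⁿ⁺²`, and `σ ↦ σ²` is a homomorphism
`H 2ⁿ → H 2ⁿ⁺¹ / H 2ⁿ⁺²`. Because every point of `E(ℚ̄)` is divisible by `2`, its kernel is
exactly `H 2ⁿ⁺¹`. So `H 2ⁿ / H 2ⁿ⁺¹` embeds into `H 2ⁿ⁺¹ / H 2ⁿ⁺²`, and the first degree divides
the second.
-/

open scoped commutatorElement in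
theorem Subgroup.relIndex_dvd_relIndex_of_sq_mem {G : Type*} [Group G] {A B C : Subgroup G}
    [C.Normal] (hcomm : ∀ a ∈ A, ∀ b ∈ A, ⁅a, b⁆ ∈ C) (hsq : ∀ a ∈ A, a ^ 2 ∈ B)
    (hker : ∀ a ∈ A, a ^ 2 ∈ C ↔ a ∈ B) : B.relIndex A ∣ C.relIndex B := by
  let φ : A →* G ⧸ C :=
    { toFun a := ((a : G) : G ⧸ C) ^ 2
      map_one' := by simp
      map_mul' a b := by
        have : Commute ((a : G) : G ⧸ C) (b : G) := commutatorElement_eq_one_iff_commute.mp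
          ((QuotientGroup.eq_one_iff _).mpr (hcomm a a.2 b b.2))
        simpa using this.mul_pow 2 }
  let ψ : B →* G ⧸ C := (QuotientGroup.mk' C).comp B.subtype
  have hφ : φ.ker = B.subgroupOf A := by
    ext a
    simp [φ, Subgroup.mem_subgroupOf, ← QuotientGroup.mk_pow, hker a a.2]
  have hψ : ψ.ker = C.subgroupOf B := by
    ext b
    simp [ψ, Subgroup.mem_subgroupOf]
  have hrange : φ.range ≤ ψ.range := by
    rintro _ ⟨a, rfl⟩
    exact ⟨⟨_, hsq a a.2⟩, by simp [φ, ψ]⟩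
  rw [Subgroup.relIndex, Subgroup.relIndex, ← hφ, ← hψ, Subgroup.index_ker, Subgroup.index_ker]
  exact Subgroup.card_dvd_of_le hrange

theorem IntermediateField.relfinrank_eq_relIndex_fixingSubgroup {F E : Type*} [Field F] [Field E]
    [Algebra F E] [IsGalois F E] {K L : IntermediateField F E} (h : K ≤ L) :
    relfinrank K L = L.fixingSubgroup.relIndex K.fixingSubgroup := by
  have hcomap : (extendScalars h).fixingSubgroup.comap (fixingSubgroupEquiv K).toMonoidHom =
      L.fixingSubgroup.subgroupOf K.fixingSubgroup := by
    ext σ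
    rfl
  rw [relfinrank_eq_finrank_of_le h, finrank_eq_fixingSubgroup_index, Subgroup.relIndex, ← hcomap,
    Subgroup.index_comap_of_surjective _ (fixingSubgroupEquiv K).surjective]

theorem IntermediateField.mem_fixingSubgroup_adjoin_iff {F E : Type*} [Field F] [Field E]
    [Algebra F E] {S : Set E} {σ : E ≃ₐ[F] E} :
    σ ∈ (adjoin F S).fixingSubgroup ↔ ∀ x ∈ S, σ x = x := by
  refine ⟨fun hσ x hx ↦ hσ ⟨x, subset_adjoin F S hx⟩, fun hσ ↦ ?_⟩
  have hle : Subgroup.zpowers σ ≤ _root_.fixingSubgroup (E ≃ₐ[F] E) S :=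
    Subgroup.zpowers_le.mpr ((_root_.mem_fixingSubgroup_iff _).mpr hσ)
  rw [← Subgroup.zpowers_le, ← le_iff_le, adjoin_le_iff]
  exact fun x hx τ ↦ (_root_.mem_fixingSubgroup_iff _).mp (hle τ.2) x hx

/- Instance search finds `DivisionRing.toRatAlgebra` on `Qbar` rather than
`AlgebraicClosure.instAlgebra`; they agree because `ℚ`-algebra structures are unique. -/
instance : IsGalois ℚ Qbar := by
  have : IsAlgClosure ℚ Qbar := by
    convert (inferInstance : @IsAlgClosure ℚ Qbar _ _ (AlgebraicClosure.instAlgebra ℚ) _)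
    exact Subsingleton.elim _ _
  infer_instance

section Action

variable {G M : Type*} [Monoid G] [AddCommGroup M] [DistribMulAction G M] {g h : G} {x : M}

theorem smul_smul_comm_of_smul_sub_self (hg : g • (h • x - x) = h • x - x)
    (hh : h • (g • x - x) = g • x - x) : g • h • x = h • g • x :=
  calc g • h • x = g • (x + (h • x - x)) := by rw [add_sub_cancel]
    _ = g • x + (h • x - x) := by rw [smul_add, hg]
    _ = h • x + (g • x - x) := by abel
    _ = h • (x + (g • x - x)) := by rw [smul_add, hh]
    _ = h • g • x := by rw [add_sub_cancel]

theorem sq_smul_of_smul_sub_self (hg : g • (g • x - x) = g • x - x) :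
    g ^ 2 • x = x + 2 • (g • x - x) :=
  calc g ^ 2 • x = g • (x + (g • x - x)) := by rw [sq, mul_smul, add_sub_cancel]
    _ = x + 2 • (g • x - x) := by rw [smul_add, hg, two_nsmul]; abel

end Action

namespace WeierstrassCurve

open Polynomial

variable {F : Type*} [Field F] (W : WeierstrassCurve F)

lemma exists_eval_Φ_two_eq_mul_eval_Ψ₂Sq [IsAlgClosed F] (a : F) :
    ∃ x, (W.Φ 2).eval x = a * W.Ψ₂Sq.eval x := by
  have hdeg : (W.Φ 2 - C a * W.Ψ₂Sq).degree = 4 := by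
    rw [Φ_two, Ψ₂Sq]
    compute_degree!
  obtain ⟨x, hx⟩ := IsAlgClosed.exists_root _ (by rw [hdeg]; decide)
  exact ⟨x, by simpa [sub_eq_zero] using hx⟩

/-- The resultant of `Ψ₂Sq` and `Φ 2` is a multiple of `Δ`. -/
lemma Δ_eq_zero_of_eval_Ψ₂Sq_eq_zero_of_eval_Φ_two_eq_zero {x : F} (hΨ : W.Ψ₂Sq.eval x = 0)
    (hΦ : (W.Φ 2).eval x = 0) : W.Δ = 0 := by
  simp only [Ψ₂Sq, Φ_two, eval_add, eval_sub, eval_mul, eval_pow, eval_C, eval_X] at hΨ hΦ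
  have hb : 4 * W.b₈ - W.b₂ * W.b₆ + W.b₄ ^ 2 = 0 := by linear_combination W.b_relation
  rw [Δ]
  linear_combination (W.b₂ ^ 2 - 32 * W.b₄ - 8 * W.b₂ * x - 48 * x ^ 2) * hΦ
    + (W.b₂ * W.b₄ - 27 * W.b₆ - 10 * W.b₄ * x - W.b₂ * x ^ 2 + 12 * x ^ 3) * hΨ
    + (-8 * W.b₄ - 2 * W.b₂ * x - 12 * x ^ 2) * hb

namespace Affine

variable {W}

lemma exists_equation [IsAlgClosed F] (x : F) : ∃ y, W.toAffine.Equation x y := by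
  have hdeg : (X ^ 2 + C (W.a₁ * x + W.a₃) * X
      - C (x ^ 3 + W.a₂ * x ^ 2 + W.a₄ * x + W.a₆) : F[X]).degree = 2 := by
    compute_degree!
  obtain ⟨y, hy⟩ := IsAlgClosed.exists_root _ (by rw [hdeg]; decide)
  refine ⟨y, (W.toAffine.equation_iff x y).mpr ?_⟩
  simp only [IsRoot.def, eval_sub, eval_add, eval_mul, eval_pow, eval_C, eval_X] at hy
  linear_combination hy

lemma sub_negY_sq {x y : F} (h : W.toAffine.Equation x y) :
    (y - W.toAffine.negY x y) ^ 2 = W.Ψ₂Sq.eval x := by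
  rw [equation_iff] at h
  simp only [negY, Ψ₂Sq, b₂, b₄, b₆, eval_add, eval_mul, eval_pow, eval_C, eval_X]
  linear_combination 4 * h

lemma addX_slope_self_mul_sub_negY_sq [DecidableEq F] {x y : F} (h : W.toAffine.Equation x y)
    (hy : y ≠ W.toAffine.negY x y) :
    W.toAffine.addX x x (W.toAffine.slope x x y y) * (y - W.toAffine.negY x y) ^ 2 =
      (W.Φ 2).eval x := by
  rw [equation_iff] at h
  rw [slope_of_Y_ne rfl hy, addX]
  field_simp
  simp only [negY, Φ_two, b₄, b₆, b₈, eval_sub, eval_mul, eval_pow, eval_C, eval_X]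
  linear_combination (-(W.a₁ ^ 2) - 4 * W.a₂ - 8 * x) * h

theorem Point.exists_two_nsmul_eq [DecidableEq F] [IsAlgClosed F] [W.IsElliptic]
    (Q : W.toAffine.Point) : ∃ P : W.toAffine.Point, 2 • P = Q := by
  rcases Q with _ | ⟨a, b, hQ⟩
  · exact ⟨0, nsmul_zero 2⟩
  -- `x(2P) = Φ₂(x) / Ψ₂Sq(x)`, so a half of `(a, b)` has `x`-coordinate a root of `Φ₂ - a Ψ₂Sq`.
  obtain ⟨x, hx⟩ := W.exists_eval_Φ_two_eq_mul_eval_Ψ₂Sq a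
  obtain ⟨y, he⟩ := exists_equation (W := W) x
  have hy : y ≠ W.toAffine.negY x y := by
    intro hy
    have hΨ : W.Ψ₂Sq.eval x = 0 := by rw [← sub_negY_sq he, ← hy, sub_self, sq, zero_mul]
    exact W.isUnit_Δ.ne_zero
      (W.Δ_eq_zero_of_eval_Ψ₂Sq_eq_zero_of_eval_Φ_two_eq_zero hΨ (by rw [hx, hΨ, mul_zero]))
  have hX : W.toAffine.addX x x (W.toAffine.slope x x y y) = a :=
    mul_right_cancel₀ (pow_ne_zero 2 (sub_ne_zero.mpr hy)) <| by
      rw [addX_slope_self_mul_sub_negY_sq he hy, hx, sub_negY_sq he]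
  have h := W.toAffine.equation_iff_nonsingular.mp he
  have h2 : 2 • Point.some x y h = Point.some _ _ (nonsingular_add h h fun hxy => hy hxy.2) := by
    rw [two_nsmul]
    exact Point.add_self_of_Y_ne hy
  rcases Y_eq_of_X_eq (nonsingular_add h h fun hxy => hy hxy.2).1 hQ.1 hX with hY | hY
  · exact ⟨Point.some x y h, by rw [h2, Point.some.injEq]; exact ⟨hX, hY⟩⟩
  · refine ⟨-Point.some x y h, ?_⟩
    rw [smul_neg, h2, Point.neg_some, Point.some.injEq, hY, hX, negY_negY]
    exact ⟨rfl, rfl⟩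

end Affine

section Galois

open Classical
open WeierstrassCurve.Affine (Point)

variable {W : WeierstrassCurve ℚ} {a b m : ℕ} {σ τ : Qbar ≃ₐ[ℚ] Qbar}
  {P : (W.baseChange Qbar).toAffine.Point}

noncomputable instance : DistribMulAction (Qbar ≃ₐ[ℚ] Qbar) (W.baseChange Qbar).toAffine.Point where
  smul σ := Point.map (W' := W) σ.toAlgHom
  one_smul P := by cases P <;> rfl
  mul_smul σ τ P := by cases P <;> rfl
  smul_zero σ := rfl
  smul_add σ := map_add _

lemma smul_some_eq_self_iff {x y : Qbar}
    (h : (W.baseChange Qbar).toAffine.Nonsingular x y) :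
    σ • Point.some x y h = Point.some x y h ↔ σ x = x ∧ σ y = y :=
  Iff.of_eq (Point.some.injEq ..)

theorem mem_fixingSubgroup_divisionField_iff :
    σ ∈ (divisionField W m).fixingSubgroup ↔
      ∀ P : (W.baseChange Qbar).toAffine.Point, m • P = 0 → σ • P = P := by
  rw [divisionField, mem_fixingSubgroup_adjoin_iff]
  constructor
  · rintro hσ (_ | ⟨x, y, h⟩) hP
    · rfl
    · exact (smul_some_eq_self_iff h).mpr
        ⟨hσ x ⟨x, y, h, hP, .inl rfl⟩, hσ y ⟨x, y, h, hP, .inr rfl⟩⟩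
  · rintro hσ c ⟨x, y, h, hP, rfl | rfl⟩
    · exact ((smul_some_eq_self_iff h).mp (hσ _ hP)).1
    · exact ((smul_some_eq_self_iff h).mp (hσ _ hP)).2

theorem divisionField_mono {m m' : ℕ} (h : m ∣ m') : divisionField W m ≤ divisionField W m' := by
  obtain ⟨d, rfl⟩ := h
  exact adjoin.mono _ _ _ fun c ⟨x, y, hxy, hm, hc⟩ ↦
    ⟨x, y, hxy, by rw [mul_nsmul, hm, nsmul_zero], hc⟩

theorem smul_eq_self_of_mem_fixingSubgroup (hσ : σ ∈ (divisionField W a).fixingSubgroup)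
    (hb : b ∣ a) (hP : b • P = 0) : σ • P = P := by
  obtain ⟨c, rfl⟩ := hb
  exact mem_fixingSubgroup_divisionField_iff.mp hσ P (by rw [mul_nsmul, hP, nsmul_zero])

theorem nsmul_smul_sub_self_eq_zero (hσ : σ ∈ (divisionField W a).fixingSubgroup)
    (hP : (a * b) • P = 0) : b • (σ • P - P) = 0 := by
  have hbP : σ • b • P = b • P :=
    mem_fixingSubgroup_divisionField_iff.mp hσ _ (by rwa [← mul_nsmul'])
  rw [nsmul_sub, smul_comm, hbP, sub_self]

theorem mul_inv_mem_fixingSubgroup_divisionField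
    (h : ∀ P : (W.baseChange Qbar).toAffine.Point, m • P = 0 → σ • P = τ • P) :
    σ * τ⁻¹ ∈ (divisionField W m).fixingSubgroup := by
  refine mem_fixingSubgroup_divisionField_iff.mpr fun P hP ↦ ?_
  rw [mul_smul, h _ ((smul_comm m τ⁻¹ P).trans (by rw [hP, smul_zero])), smul_inv_smul]

instance fixingSubgroup_divisionField_normal : (divisionField W m).fixingSubgroup.Normal where
  conj_mem τ hτ σ := mul_inv_mem_fixingSubgroup_divisionField fun P hP ↦ by
    rw [mul_smul, mem_fixingSubgroup_divisionField_iff.mp hτ P hP]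

open scoped commutatorElement in
theorem commutatorElement_mem_fixingSubgroup_divisionField (hb : b ∣ a)
    (hσ : σ ∈ (divisionField W a).fixingSubgroup) (hτ : τ ∈ (divisionField W a).fixingSubgroup) :
    ⁅σ, τ⁆ ∈ (divisionField W (a * b)).fixingSubgroup := by
  rw [commutatorElement_def, show σ * τ * σ⁻¹ * τ⁻¹ = σ * τ * (τ * σ)⁻¹ by group]
  refine mul_inv_mem_fixingSubgroup_divisionField fun P hP ↦ ?_
  rw [mul_smul, mul_smul]
  exact smul_smul_comm_of_smul_sub_self
    (smul_eq_self_of_mem_fixingSubgroup hσ hb (nsmul_smul_sub_self_eq_zero hτ hP))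
    (smul_eq_self_of_mem_fixingSubgroup hτ hb (nsmul_smul_sub_self_eq_zero hσ hP))

theorem sq_mem_fixingSubgroup_divisionField (h2 : 2 ∣ a)
    (hσ : σ ∈ (divisionField W a).fixingSubgroup) :
    σ ^ 2 ∈ (divisionField W (a * 2)).fixingSubgroup := by
  refine mem_fixingSubgroup_divisionField_iff.mpr fun P hP ↦ ?_
  have ht := nsmul_smul_sub_self_eq_zero hσ hP
  rw [sq_smul_of_smul_sub_self (smul_eq_self_of_mem_fixingSubgroup hσ h2 ht), ht, add_zero]

instance [W.IsElliptic] : (W.baseChange Qbar).IsElliptic :=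
  inferInstanceAs (W.map _).IsElliptic

theorem mem_fixingSubgroup_divisionField_of_sq_mem [W.IsElliptic] (h4 : 4 ∣ a)
    (hσ : σ ∈ (divisionField W a).fixingSubgroup)
    (hsq : σ ^ 2 ∈ (divisionField W (a * 4)).fixingSubgroup) :
    σ ∈ (divisionField W (a * 2)).fixingSubgroup := by
  refine mem_fixingSubgroup_divisionField_iff.mpr fun Q hQ ↦ ?_
  obtain ⟨P, rfl⟩ := Affine.Point.exists_two_nsmul_eq Q
  have hP : (a * 4) • P = 0 := by rwa [show a * 4 = a * 2 * 2 by ring, mul_nsmul']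
  have hσt := smul_eq_self_of_mem_fixingSubgroup hσ h4 (nsmul_smul_sub_self_eq_zero hσ hP)
  have h2t : 2 • (σ • P - P) = 0 := by
    simpa [sq_smul_of_smul_sub_self hσt] using mem_fixingSubgroup_divisionField_iff.mp hsq P hP
  rw [smul_comm, ← add_sub_cancel P (σ • P), nsmul_add, h2t, add_zero]

end Galois

end WeierstrassCurve

theorem dvd_relfinrank_succ_of_dvd_relfinrank_two_general (W : WeierstrassCurve ℚ) [W.IsElliptic]
    (n : ℕ) (hn : 2 ≤ n) (k : ℕ)
    (h : 2 ^ k ∣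
      IntermediateField.relfinrank (divisionField W (2 ^ n)) (divisionField W (2 ^ (n + 1)))) :
    2 ^ k ∣
      IntermediateField.relfinrank (divisionField W (2 ^ (n + 1)))
        (divisionField W (2 ^ (n + 2))) := by
  have h4 : 4 ∣ 2 ^ n := pow_dvd_pow 2 hn
  have h2 : 2 ∣ 2 ^ n := dvd_pow_self 2 (by omega)
  have e1 : 2 ^ (n + 1) = 2 ^ n * 2 := pow_succ 2 n
  have e2 : 2 ^ (n + 2) = 2 ^ n * 4 := by ring
  have e3 : 2 ^ (n + 2) = 2 ^ (n + 1) * 2 := pow_succ 2 (n + 1)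
  rw [relfinrank_eq_relIndex_fixingSubgroup (divisionField_mono (pow_dvd_pow 2 n.le_succ))] at h
  rw [relfinrank_eq_relIndex_fixingSubgroup (divisionField_mono (pow_dvd_pow 2 (n + 1).le_succ))]
  refine h.trans (Subgroup.relIndex_dvd_relIndex_of_sq_mem (fun σ hσ τ hτ ↦ ?_) (fun σ hσ ↦ ?_)
    fun σ hσ ↦ ⟨fun hsq ↦ ?_, fun hσ' ↦ ?_⟩)
  · rw [e2]; exact commutatorElement_mem_fixingSubgroup_divisionField h4 hσ hτ
  · rw [e1]; exact sq_mem_fixingSubgroup_divisionField h2 hσ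
  · rw [e1]; exact mem_fixingSubgroup_divisionField_of_sq_mem h4 hσ (e2 ▸ hsq)
  · rw [e3]; exact sq_mem_fixingSubgroup_divisionField (dvd_pow_self 2 n.succ_ne_zero) hσ'

/-- If `n ≥ 2`, `k ∈ {1,2,3,4}`, and `2^k ∣ [ℚ(E[2^(n+1)]) : ℚ(E[2^n])]`, then
`2^k ∣ [ℚ(E[2^(n+2)]) : ℚ(E[2^(n+1)])]`. The relative degree of the (nested) division
fields is expressed via `IntermediateField.relfinrank`. -/
theorem dvd_relfinrank_succ_of_dvd_relfinrank_two (W : WeierstrassCurve ℚ) [W.IsElliptic]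
    (n : ℕ) (hn : 2 ≤ n) (k : ℕ) (hk : k ∈ ({1, 2, 3, 4} : Set ℕ))
    (h : 2 ^ k ∣
      IntermediateField.relfinrank (divisionField W (2 ^ n)) (divisionField W (2 ^ (n + 1)))) :
    2 ^ k ∣
      IntermediateField.relfinrank (divisionField W (2 ^ (n + 1)))
        (divisionField W (2 ^ (n + 2))) :=
  dvd_relfinrank_succ_of_dvd_relfinrank_two_general W n hn k h
end

section
/- Let p be a prime and let G be a nilpotent subgroup of GL₂(ℤ/p²ℤ). Let π : GL₂(ℤ/p²ℤ) → GL₂(ℤ/pℤ) be the entrywise reduction map, and assume that p does not divide the order of π(G). Then at least one of the following holds: (1) G is abelian; (2) every element of G lying in the kernel of π is a scalar matrix αI with α ∈ (ℤ/p²ℤ)ˣ and α ≡ 1 (mod p). -/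
/-!
Write `K` for the kernel of the reduction on `G`. Its elements are `1 + p M`, and since `p² = 0`
they multiply by adding the `M`'s: `K` is abelian of exponent `p`. As `p ∤ |π(G)|`, `K` is the
Sylow `p`-subgroup of the nilpotent group `G`, and every other Sylow subgroup `Q` centralizes it
and meets it trivially. If some `g = 1 + p M ∈ K` is not scalar, then `M mod p` is not scalar,
and commuting with `g` forces `π(Q)` into the centralizer of `M mod p` in `M₂(𝔽_p)`, which is the
commutative algebra `𝔽_p[M mod p]`. Hence every Sylow subgroup, and so `G`, is abelian.
-/

open Matrix

/-- The entrywise reduction map `GL₂(ℤ/p²ℤ) → GL₂(ℤ/pℤ)` induced by the ring homomorphism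
`ℤ/p²ℤ → ℤ/pℤ`. -/
noncomputable def glRed (p : ℕ) :
    GL (Fin 2) (ZMod (p ^ 2)) →* GL (Fin 2) (ZMod p) :=
  Matrix.GeneralLinearGroup.map (ZMod.castHom (dvd_pow_self p two_ne_zero) (ZMod p))

namespace Group

variable {G : Type*} [Group G] [Finite G] [IsNilpotent G]

theorem commute_of_forall_sylow_commute
    (h : ∀ (q : ℕ) [Fact q.Prime] (P : Sylow q G), ∀ x ∈ P, ∀ y ∈ P, Commute x y) (x y : G) :
    Commute x y := by
  obtain ⟨e⟩ := (isNilpotent_of_finite_tfae.out 0 4).mp ‹_›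
  have hprod (u v : ∀ q : (Nat.card G).primeFactors, ∀ P : Sylow q G, P) : Commute u v := by
    funext q P
    have := Fact.mk (Nat.prime_of_mem_primeFactors q.2)
    exact Subtype.ext (h q P _ (u q P).2 _ (v q P).2)
  simpa using (hprod (e.symm x) (e.symm y)).map e

end Group

theorem IsPGroup.le_ker_of_not_dvd_card_range {G H : Type*} [Group G] [Group H] {p : ℕ}
    [Fact p.Prime] {P : Subgroup G} (hP : IsPGroup p P) (φ : G →* H)
    (h : ¬ p ∣ Nat.card φ.range) : P ≤ φ.ker := by
  rw [← Subgroup.map_eq_bot_iff, ← Subgroup.card_eq_one]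
  refine (hP.map φ).card_eq_or_dvd.resolve_right fun hdvd => h (hdvd.trans ?_)
  exact Subgroup.card_dvd_of_le (Subgroup.map_le_range φ P)

theorem MonoidHom.commute_of_commute_map_of_disjoint_ker {G H : Type*} [Group G] [Group H]
    (φ : G →* H) {P : Subgroup G} (hP : Disjoint φ.ker P) {x y : G} (hx : x ∈ P) (hy : y ∈ P)
    (h : Commute (φ x) (φ y)) : Commute x y := by
  have hmem : x * y * (y * x)⁻¹ ∈ φ.ker ⊓ P :=
    ⟨by simp [h.eq], P.mul_mem (P.mul_mem hx hy) (P.inv_mem (P.mul_mem hy hx))⟩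
  rwa [hP.eq_bot, Subgroup.mem_bot, mul_inv_eq_one] at hmem

theorem Group.commute_of_isPGroup_ker_of_not_dvd_card_range {G H : Type*} [Group G] [Group H]
    [Finite G] [Group.IsNilpotent G] {p : ℕ} [Fact p.Prime] (φ : G →* H) (hK : IsPGroup p φ.ker)
    (hKcomm : ∀ x ∈ φ.ker, ∀ y ∈ φ.ker, Commute x y) (hp : ¬ p ∣ Nat.card φ.range)
    {g : G} (hg : g ∈ φ.ker) (hcent : ∀ x y, Commute x g → Commute y g → Commute (φ x) (φ y))
    (x y : G) : Commute x y := by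
  refine Group.commute_of_forall_sylow_commute (fun q _ P x hx y hy => ?_) x y
  by_cases hq : q = p
  · subst hq
    have hPK := P.isPGroup'.le_ker_of_not_dvd_card_range φ hp
    exact hKcomm x (hPK hx) y (hPK hy)
  · have hdisj : Disjoint φ.ker P := IsPGroup.disjoint_of_ne p q (Ne.symm hq) _ _ hK P.isPGroup'
    have hcomm := Subgroup.commute_of_normal_of_disjoint _ _ φ.normal_ker inferInstance hdisj g
    exact φ.commute_of_commute_map_of_disjoint_ker hdisj hx hy
      (hcent x y (hcomm x hg hx).symm (hcomm y hg hy).symm)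

namespace Matrix

variable {K : Type*} [Field K]

theorem exists_eq_smul_add_smul_one_of_commute {A B : Matrix (Fin 2) (Fin 2) K}
    (hA : ∀ c : K, A ≠ c • 1) (h : Commute A B) : ∃ x y : K, B = x • A + y • 1 := by
  obtain ⟨a, b, c, d, rfl⟩ : ∃ a b c d, A = !![a, b; c, d] := ⟨_, _, _, _, eta_fin_two A⟩
  obtain ⟨e, f, g, k, rfl⟩ : ∃ e f g k, B = !![e, f; g, k] := ⟨_, _, _, _, eta_fin_two B⟩
  obtain ⟨⟨h₀₀, h₀₁⟩, h₁₀, -⟩ :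
      (a * e + b * g = e * a + f * c ∧ a * f + b * k = e * b + f * d) ∧
        c * e + d * g = g * a + k * c ∧ c * f + d * k = g * b + k * d := by
    simpa [mul_fin_two] using h.eq
  -- These say that `(f, g, e - k)` is proportional to the nonzero vector `(b, c, a - d)`.
  by_cases hb : b = 0
  · by_cases hc : c = 0
    · subst hb hc
      have had : a - d ≠ 0 := sub_ne_zero.mpr fun had => hA a (by
        ext i j; fin_cases i <;> fin_cases j <;> simp [had])
      refine ⟨(e - k) / (a - d), k - (e - k) / (a - d) * d, ?_⟩
      ext i j; fin_cases i <;> fin_cases j <;> simp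
      · field_simp; ring
      · exact mul_right_cancel₀ had (by linear_combination h₀₁)
      · exact mul_right_cancel₀ had (by linear_combination -h₁₀)
    · refine ⟨g / c, k - g / c * d, ?_⟩
      ext i j; fin_cases i <;> fin_cases j <;> simp <;> field_simp
      · linear_combination h₁₀
      · linear_combination -h₀₀
  · refine ⟨f / b, k - f / b * d, ?_⟩
    ext i j; fin_cases i <;> fin_cases j <;> simp <;> field_simp
    · linear_combination -h₀₁
    · linear_combination h₀₀

theorem commute_of_commute_of_ne_smul_one {A B C : Matrix (Fin 2) (Fin 2) K}
    (hA : ∀ c : K, A ≠ c • 1) (hB : Commute A B) (hC : Commute A C) : Commute B C := by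
  obtain ⟨x, y, rfl⟩ := exists_eq_smul_add_smul_one_of_commute hA hB
  obtain ⟨x', y', rfl⟩ := exists_eq_smul_add_smul_one_of_commute hA hC
  have hBA : Commute (x • A + y • 1) A :=
    ((Commute.refl A).smul_left x).add_left ((Commute.one_left A).smul_left y)
  exact (hBA.smul_right x').add_right ((Commute.one_right _).smul_right y')

end Matrix

section ReductionModSq

variable {p : ℕ}

local notation "ρ" => ZMod.castHom (dvd_pow_self p two_ne_zero) (ZMod p)

namespace ZMod

theorem natCast_mul_self_eq_zero : (p : ZMod (p ^ 2)) * p = 0 := by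
  rw [← Nat.cast_mul, ← sq, natCast_self]

variable [NeZero p]

theorem natCast_mul_eq_zero_iff_castHom_eq_zero (y : ZMod (p ^ 2)) :
    (p : ZMod (p ^ 2)) * y = 0 ↔ ρ y = 0 := by
  rw [← natCast_zmod_val y, ← Nat.cast_mul, map_natCast, natCast_eq_zero_iff,
    natCast_eq_zero_iff]
  simpa [sq] using Nat.mul_dvd_mul_iff_left (NeZero.pos p)

theorem exists_eq_natCast_mul_of_castHom_eq_zero {x : ZMod (p ^ 2)} (hx : ρ x = 0) :
    ∃ y, x = p * y := by
  rw [← natCast_zmod_val x, map_natCast, natCast_eq_zero_iff] at hx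
  obtain ⟨y, hy⟩ := hx
  exact ⟨y, by rw [← natCast_zmod_val x, hy, Nat.cast_mul]⟩

end ZMod

namespace Matrix

variable {n : Type*}

theorem map_natCast_smul (M : Matrix n n (ZMod (p ^ 2))) :
    ((p : ZMod (p ^ 2)) • M).map ρ = 0 := by
  ext i j
  simp

theorem natCast_smul_eq_zero_iff [NeZero p] (M : Matrix n n (ZMod (p ^ 2))) :
    (p : ZMod (p ^ 2)) • M = 0 ↔ M.map ρ = 0 := by
  simp only [← Matrix.ext_iff, smul_apply, smul_eq_mul, map_apply, zero_apply,
    ZMod.natCast_mul_eq_zero_iff_castHom_eq_zero]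

theorem exists_eq_natCast_smul_of_map_eq_zero [NeZero p] {N : Matrix n n (ZMod (p ^ 2))}
    (hN : N.map ρ = 0) : ∃ M, N = (p : ZMod (p ^ 2)) • M := by
  choose M hM using fun i j =>
    ZMod.exists_eq_natCast_mul_of_castHom_eq_zero (congr_fun₂ hN i j)
  exact ⟨of M, ext hM⟩

variable [Fintype n] [DecidableEq n]

theorem one_add_natCast_smul_mul (M N : Matrix n n (ZMod (p ^ 2))) :
    (1 + (p : ZMod (p ^ 2)) • M) * (1 + (p : ZMod (p ^ 2)) • N) =
      1 + (p : ZMod (p ^ 2)) • (M + N) := by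
  rw [mul_add, add_mul, add_mul, smul_mul_smul_comm, ZMod.natCast_mul_self_eq_zero,
    zero_smul, add_zero, one_mul, mul_one, one_mul, smul_add, add_assoc]

theorem one_add_natCast_smul_pow (M : Matrix n n (ZMod (p ^ 2))) (k : ℕ) :
    (1 + (p : ZMod (p ^ 2)) • M) ^ k = 1 + (p : ZMod (p ^ 2)) • (k • M) := by
  induction k with
  | zero => simp
  | succ k ih => rw [pow_succ (1 + _) k, ih, one_add_natCast_smul_mul, succ_nsmul]

theorem one_add_natCast_smul_pow_self (M : Matrix n n (ZMod (p ^ 2))) :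
    (1 + (p : ZMod (p ^ 2)) • M) ^ p = 1 := by
  rw [one_add_natCast_smul_pow, ← Nat.cast_smul_eq_nsmul (ZMod (p ^ 2)), smul_smul,
    ZMod.natCast_mul_self_eq_zero, zero_smul, add_zero]

variable [NeZero p]

theorem commute_map_of_commute_one_add_natCast_smul {U M : Matrix n n (ZMod (p ^ 2))}
    (h : Commute U (1 + (p : ZMod (p ^ 2)) • M)) : Commute (U.map ρ) (M.map ρ) := by
  have hcomm : (p : ZMod (p ^ 2)) • (U * M - M * U) = 0 := by
    have h := h.eq
    rw [mul_add, add_mul, mul_one, one_mul, mul_smul_comm, smul_mul_assoc] at h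
    rw [smul_sub, add_left_cancel h, sub_self]
  rw [natCast_smul_eq_zero_iff, ← RingHom.mapMatrix_apply, map_sub, map_mul, map_mul,
    sub_eq_zero] at hcomm
  exact hcomm

theorem exists_units_of_map_eq_smul_one {M : Matrix n n (ZMod (p ^ 2))} {c : ZMod p}
    (h : M.map ρ = c • 1) :
    ∃ α : (ZMod (p ^ 2))ˣ, 1 + (p : ZMod (p ^ 2)) • M = (α : ZMod (p ^ 2)) • 1 ∧ ρ α = 1 := by
  obtain ⟨c, rfl⟩ := ZMod.ringHom_surjective ρ c
  have hM : (p : ZMod (p ^ 2)) • M = ((p : ZMod (p ^ 2)) * c) • 1 := by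
    rw [← sub_eq_zero, mul_smul, ← smul_sub, natCast_smul_eq_zero_iff, ← RingHom.mapMatrix_apply,
      map_sub, RingHom.mapMatrix_apply, RingHom.mapMatrix_apply, h, map_smul' _ _ _ (map_mul _),
      Matrix.map_one _ (map_zero _) (map_one _), sub_self]
  have hunit : IsUnit (1 + (p : ZMod (p ^ 2)) * c) := IsNilpotent.isUnit_one_add
    ⟨2, by rw [mul_pow, sq (p : ZMod (p ^ 2)), ZMod.natCast_mul_self_eq_zero, zero_mul]⟩
  refine ⟨hunit.unit, ?_, ?_⟩
  · rw [IsUnit.unit_spec, add_smul, one_smul, hM]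
  · simp

end Matrix

theorem coe_glRed (g : GL (Fin 2) (ZMod (p ^ 2))) :
    (glRed p g : Matrix (Fin 2) (Fin 2) (ZMod p)) =
      (g : Matrix (Fin 2) (Fin 2) (ZMod (p ^ 2))).map ρ :=
  rfl

theorem glRed_eq_one_iff [NeZero p] {g : GL (Fin 2) (ZMod (p ^ 2))} :
    glRed p g = 1 ↔
      ∃ M, (g : Matrix (Fin 2) (Fin 2) (ZMod (p ^ 2))) = 1 + (p : ZMod (p ^ 2)) • M := by
  rw [Units.ext_iff, coe_glRed, Units.val_one]
  constructor
  · intro h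
    obtain ⟨M, hM⟩ := Matrix.exists_eq_natCast_smul_of_map_eq_zero (p := p)
      (N := (g : Matrix (Fin 2) (Fin 2) (ZMod (p ^ 2))) - 1)
      (by rw [← RingHom.mapMatrix_apply, map_sub, map_one, RingHom.mapMatrix_apply, h, sub_self])
    exact ⟨M, eq_add_of_sub_eq' hM⟩
  · rintro ⟨M, hM⟩
    rw [hM, ← RingHom.mapMatrix_apply, map_add, map_one, RingHom.mapMatrix_apply,
      Matrix.map_natCast_smul, add_zero]

theorem commute_of_glRed_eq_one [NeZero p] {g h : GL (Fin 2) (ZMod (p ^ 2))}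
    (hg : glRed p g = 1) (hh : glRed p h = 1) : Commute g h := by
  obtain ⟨M, hM⟩ := glRed_eq_one_iff.mp hg
  obtain ⟨N, hN⟩ := glRed_eq_one_iff.mp hh
  refine Units.ext ?_
  rw [Units.val_mul, Units.val_mul, hM, hN, Matrix.one_add_natCast_smul_mul,
    Matrix.one_add_natCast_smul_mul, add_comm M]

theorem isPGroup_ker_glRed [NeZero p] : IsPGroup p (glRed p).ker := fun g => by
  obtain ⟨M, hM⟩ := glRed_eq_one_iff.mp g.2
  refine ⟨1, Subtype.ext (Units.ext ?_)⟩
  rw [pow_one, Subgroup.coe_pow, Units.val_pow_eq_pow_val, hM,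
    Matrix.one_add_natCast_smul_pow_self]
  rfl

theorem commute_glRed_of_commute [Fact p.Prime] {g x y : GL (Fin 2) (ZMod (p ^ 2))}
    {M : Matrix (Fin 2) (Fin 2) (ZMod (p ^ 2))}
    (hM : (g : Matrix (Fin 2) (Fin 2) (ZMod (p ^ 2))) = 1 + (p : ZMod (p ^ 2)) • M)
    (hns : ∀ c : ZMod p, M.map ρ ≠ c • 1) (hx : Commute x g) (hy : Commute y g) :
    Commute (glRed p x) (glRed p y) := by
  have hred {z : GL (Fin 2) (ZMod (p ^ 2))} (hz : Commute z g) :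
      Commute (M.map ρ) ((z : Matrix (Fin 2) (Fin 2) (ZMod (p ^ 2))).map ρ) := by
    have hz' := hz.units_val
    rw [hM] at hz'
    exact (Matrix.commute_map_of_commute_one_add_natCast_smul hz').symm
  have hxy := Matrix.commute_of_commute_of_ne_smul_one hns (hred hx) (hred hy)
  rw [← coe_glRed, ← coe_glRed] at hxy
  exact Units.ext hxy.eq

end ReductionModSq

/-- Let `p` be a prime and `G` a nilpotent subgroup of `GL₂(ℤ/p²ℤ)`. If `p` does not divide
the order of the image of `G` under entrywise reduction mod `p`, then either `G` is abelian,
or every element of `G` in the kernel of the reduction is a scalar matrix `α • 1` with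
`α ∈ (ℤ/p²ℤ)ˣ` and `α ≡ 1 (mod p)`. -/
theorem nilpotent_subgroup_GL2_ZMod_sq (p : ℕ) (hp : p.Prime)
    (G : Subgroup (GL (Fin 2) (ZMod (p ^ 2))))
    (hnil : Group.IsNilpotent G)
    (hord : ¬ p ∣ Nat.card (G.map (glRed p))) :
    (∀ a ∈ G, ∀ b ∈ G, a * b = b * a) ∨
      (∀ g ∈ G, glRed p g = 1 →
        ∃ α : (ZMod (p ^ 2))ˣ,
          (g : Matrix (Fin 2) (Fin 2) (ZMod (p ^ 2))) =
              (α : ZMod (p ^ 2)) • (1 : Matrix (Fin 2) (Fin 2) (ZMod (p ^ 2))) ∧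
            ZMod.castHom (dvd_pow_self p two_ne_zero) (ZMod p) (α : ZMod (p ^ 2)) = 1) := by
  have := Fact.mk hp
  refine or_iff_not_imp_right.mpr fun hscalar => ?_
  push Not at hscalar
  obtain ⟨g, hgG, hg, hgns⟩ := hscalar
  obtain ⟨M, hM⟩ := glRed_eq_one_iff.mp hg
  have hMns : ∀ c, M.map (ZMod.castHom (dvd_pow_self p two_ne_zero) (ZMod p)) ≠ c • 1 :=
    fun c hc => by
      obtain ⟨α, hα, hα1⟩ := Matrix.exists_units_of_map_eq_smul_one hc
      exact hgns α (hM.trans hα) hα1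
  have hcomm := Group.commute_of_isPGroup_ker_of_not_dvd_card_range ((glRed p).comp G.subtype)
    (by
      rw [← MonoidHom.comap_ker]
      exact isPGroup_ker_glRed.comap_of_injective _ G.subtype_injective)
    (fun x hx y hy => Subtype.ext (commute_of_glRed_eq_one hx hy).eq)
    (by rwa [MonoidHom.range_comp, Subgroup.range_subtype]) (g := ⟨g, hgG⟩) hg
    (fun x y hx hy => commute_glRed_of_commute hM hMns (congr_arg Subtype.val hx.eq)
      (congr_arg Subtype.val hy.eq))
  exact fun a ha b hb => congr_arg Subtype.val (hcomm ⟨a, ha⟩ ⟨b, hb⟩).eq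
end

section
/- Let p be a prime and let G be an admissible nilpotent subgroup of GL₂(ℤ/pℤ) (i.e., det(G) = (ℤ/pℤ)ˣ and G contains a matrix of determinant −1 and trace 0 fixing some nonzero vector of (ℤ/pℤ)²) such that p divides the order of G and G is contained in the group of upper triangular matrices. Then p = 2 and G is the subgroup of GL₂(ℤ/2ℤ) generated by the matrix [[1,1],[0,1]]. -/
/-!
An element of order `p` in the upper triangular group `G` (Cauchy) is unipotent, so `G` contains
the whole unipotent radical `U = {[[1, t], [0, 1]]}`. Commutators `⁅u, g⁆` with `u ∈ U` and
`g = [[a, b], [0, d]]` sweep out all of `U` as soon as `a ≠ d`; then `U` lies in every term of the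
lower central series, so nilpotency forces `a = d` for every element of `G`. Hence every
determinant `a²` is a square, and surjectivity of `det` on `G` gives `p = 2`. Over `ℤ/2ℤ` the
upper triangular group is `U` itself.
-/

open Matrix
open scoped commutatorElement

theorem Subgroup.eq_one_of_forall_eq_commutator {G : Type*} [Group G] {S : Subgroup G}
    (hS : Group.IsNilpotent S) {T : Set G} (hTS : T ⊆ S)
    (hT : ∀ x ∈ T, ∃ y ∈ T, ∃ g ∈ S, ⁅y, g⁆ = x) {x : G} (hx : x ∈ T) :
    x = 1 := by
  obtain ⟨n, hn⟩ := (Subgroup.isNilpotent_iff_lowerCentralSeries S).mp hS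
  have hTn : ∀ n, T ⊆ S.lowerCentralSeries n := by
    intro n
    induction n with
    | zero => exact hTS
    | succ n ih =>
      intro x hx
      obtain ⟨y, hy, g, hg, rfl⟩ := hT x hx
      exact Subgroup.commutator_mem_commutator (ih hy) hg
  simpa [hn] using hTn n hx

theorem FiniteField.ringChar_eq_two_of_forall_isSquare {F : Type*} [Field F] [Finite F]
    (h : ∀ c : F, c ≠ 0 → IsSquare c) : ringChar F = 2 := by
  by_contra hF
  obtain ⟨c, hc⟩ := FiniteField.exists_nonsquare hF
  exact hc (h c fun h0 => hc (h0 ▸ IsSquare.zero))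

namespace Matrix.GeneralLinearGroup

section CommRing

variable {R : Type*} [CommRing R] {g : GL (Fin 2) R}

lemma pow_apply_of_upperTriangular (hg : g 1 0 = 0) (n : ℕ) :
    (g ^ n) 1 0 = 0 ∧ (g ^ n) 0 0 = g 0 0 ^ n ∧ (g ^ n) 1 1 = g 1 1 ^ n := by
  induction n with
  | zero => simp
  | succ n ih =>
    simp only [pow_succ, Units.val_mul, mul_apply, Fin.sum_univ_two, ih.1, ih.2.1, ih.2.2, hg]
    simp

lemma val_det_of_upperTriangular (hg : g 1 0 = 0) : g.val.det = g 0 0 * g 1 1 := by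
  simp [det_fin_two, hg]

lemma eq_upperRightHom_of_diag_eq_one (h10 : g 1 0 = 0) (h00 : g 0 0 = 1) (h11 : g 1 1 = 1) :
    g = upperRightHom (g 0 1) := by
  ext i j
  fin_cases i <;> fin_cases j <;> simp [h10, h00, h11]

end CommRing

section Field

variable {K : Type*} [Field K] {g : GL (Fin 2) K}

lemma diag_ne_zero_of_upperTriangular (hg : g 1 0 = 0) : g 0 0 ≠ 0 ∧ g 1 1 ≠ 0 := by
  simpa [val_det_of_upperTriangular hg] using g.det_ne_zero

lemma conj_upperRightHom (hg : g 1 0 = 0) (t : K) :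
    g * upperRightHom t * g⁻¹ = upperRightHom (g 0 0 / g 1 1 * t) := by
  rw [mul_inv_eq_iff_eq_mul, Units.ext_iff]
  have hd := (diag_ne_zero_of_upperTriangular hg).2
  rw [Units.val_mul, Units.val_mul, upperRightHom_apply, upperRightHom_apply, eta_fin_two g.val]
  simp only [hg]
  ext i j
  fin_cases i <;> fin_cases j <;> simp [mul_apply, Fin.sum_univ_two]
  field_simp
  ring

lemma commutatorElement_upperRightHom (hg : g 1 0 = 0) (s : K) :
    ⁅upperRightHom s, g⁆ = upperRightHom (s * (1 - g 0 0 / g 1 1)) := by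
  rw [commutatorElement_def, mul_assoc, mul_assoc, ← mul_assoc g, ← AddChar.map_neg_eq_inv,
    conj_upperRightHom hg, ← AddChar.map_add_eq_mul]
  ring_nf

lemma diag_eq_of_isNilpotent {G : Subgroup (GL (Fin 2) K)} (hG : Group.IsNilpotent G)
    (hU : ∀ t, upperRightHom t ∈ G) (hg : g ∈ G) (h10 : g 1 0 = 0) : g 0 0 = g 1 1 := by
  by_contra hne
  have hr : 1 - g 0 0 / g 1 1 ≠ 0 := by
    rwa [sub_ne_zero, ne_comm, ne_eq, div_eq_one_iff_eq (diag_ne_zero_of_upperTriangular h10).2]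
  have h1 : upperRightHom (1 : K) = 1 := by
    refine Subgroup.eq_one_of_forall_eq_commutator hG (T := Set.range upperRightHom)
      (Set.range_subset_iff.mpr hU) ?_ ⟨1, rfl⟩
    rintro _ ⟨t, rfl⟩
    refine ⟨_, ⟨t / (1 - g 0 0 / g 1 1), rfl⟩, g, hg, ?_⟩
    rw [commutatorElement_upperRightHom h10, div_mul_cancel₀ _ hr]
  exact one_ne_zero (injective_upperRightHom (h1.trans (AddChar.map_zero_eq_one _).symm))

end Field

section ZMod

variable {p : ℕ} [Fact p.Prime]

lemma eq_upperRightHom_of_pow_char_eq_one {g : GL (Fin 2) (ZMod p)} (hg : g 1 0 = 0)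
    (hgp : g ^ p = 1) : g = upperRightHom (g 0 1) := by
  obtain ⟨-, h00, h11⟩ := pow_apply_of_upperTriangular hg p
  simp only [hgp, ZMod.pow_card, Units.val_one, one_apply_eq] at h00 h11
  exact eq_upperRightHom_of_diag_eq_one hg h00.symm h11.symm

lemma upperRightHom_mem_zpowers {b : ZMod p} (hb : b ≠ 0) (t : ZMod p) :
    upperRightHom t ∈ Subgroup.zpowers (upperRightHom b) := by
  have ht : t = (t / b).val • b := by
    rw [nsmul_eq_mul, ZMod.natCast_zmod_val, div_mul_cancel₀ _ hb]
  rw [ht, AddChar.map_nsmul_eq_pow]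
  exact Subgroup.npow_mem_zpowers _ _

end ZMod

lemma eq_upperRightHom_of_upperTriangular_zmod_two {g : GL (Fin 2) (ZMod 2)} (hg : g 1 0 = 0) :
    g = upperRightHom (g 0 1) := by
  have hunit : ∀ a : ZMod 2, a ≠ 0 → a = 1 := by decide
  obtain ⟨h00, h11⟩ := diag_ne_zero_of_upperTriangular hg
  exact eq_upperRightHom_of_diag_eq_one hg (hunit _ h00) (hunit _ h11)

end Matrix.GeneralLinearGroup

open Matrix.GeneralLinearGroup

theorem nilpotent_admissible_borel_subgroup_GL2_general (p : ℕ) (hp : p.Prime)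
    (G : Subgroup (GL (Fin 2) (ZMod p)))
    (hnil : Group.IsNilpotent G)
    (hdet : ∀ u : (ZMod p)ˣ, ∃ g ∈ G, Matrix.GeneralLinearGroup.det g = u)
    (hord : p ∣ Nat.card G)
    (htri : ∀ g ∈ G, (g : Matrix (Fin 2) (Fin 2) (ZMod p)) 1 0 = 0) :
    p = 2 ∧
      G = Subgroup.closure
        {g : GL (Fin 2) (ZMod p) |
          (g : Matrix (Fin 2) (Fin 2) (ZMod p)) = !![1, 1; 0, 1]} := by
  have : Fact p.Prime := ⟨hp⟩
  obtain ⟨x, hx⟩ := exists_prime_orderOf_dvd_card' p hord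
  have hxp : x ^ p = 1 := orderOf_dvd_iff_pow_eq_one.mp (dvd_of_eq hx)
  have hxu : (x : GL (Fin 2) (ZMod p)) = upperRightHom (x.1 0 1) :=
    eq_upperRightHom_of_pow_char_eq_one (htri _ x.2) (by simpa using congrArg Subtype.val hxp)
  have hb : x.1 0 1 ≠ 0 := fun h => hp.one_lt.ne' <| by
    rw [← hx, orderOf_eq_one_iff, Subtype.ext_iff, hxu, h, AddChar.map_zero_eq_one]; rfl
  have hU : ∀ t, upperRightHom t ∈ G := fun t =>
    Subgroup.zpowers_le.mpr (hxu ▸ x.2) (upperRightHom_mem_zpowers hb t)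
  obtain rfl : p = 2 := by
    rw [← ZMod.ringChar_zmod_n p]
    refine FiniteField.ringChar_eq_two_of_forall_isSquare fun c hc => ?_
    obtain ⟨g, hg, hgc⟩ := hdet (Units.mk0 c hc)
    refine ⟨g 1 1, ?_⟩
    rw [← Units.val_mk0 hc, ← hgc, val_det_apply, val_det_of_upperTriangular (htri g hg),
      diag_eq_of_isNilpotent hnil hU hg (htri g hg)]
  refine ⟨rfl, ?_⟩
  have hgen : {g : GL (Fin 2) (ZMod 2) | (g : Matrix (Fin 2) (Fin 2) (ZMod 2)) = !![1, 1; 0, 1]} =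
      {upperRightHom 1} := by
    ext g
    simp [Units.ext_iff]
  rw [hgen, ← Subgroup.zpowers_eq_closure]
  refine le_antisymm (fun g hg => ?_) (Subgroup.zpowers_le.mpr (hU 1))
  rw [eq_upperRightHom_of_upperTriangular_zmod_two (htri g hg)]
  exact upperRightHom_mem_zpowers one_ne_zero _

/-- Let `p` be a prime and `G` an admissible nilpotent subgroup of `GL₂(ℤ/pℤ)` (i.e.
`det(G) = (ℤ/pℤ)ˣ` and `G` contains a matrix of determinant `-1` and trace `0` fixing a
nonzero vector) such that `p` divides the order of `G` and `G` is contained in the group of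
upper triangular matrices. Then `p = 2` and `G` is the subgroup generated by
`[[1, 1], [0, 1]]`. -/
theorem nilpotent_admissible_borel_subgroup_GL2 (p : ℕ) (hp : p.Prime)
    (G : Subgroup (GL (Fin 2) (ZMod p)))
    (hnil : Group.IsNilpotent G)
    (hdet : ∀ u : (ZMod p)ˣ, ∃ g ∈ G, Matrix.GeneralLinearGroup.det g = u)
    (hadm : ∃ g ∈ G, (g : Matrix (Fin 2) (Fin 2) (ZMod p)).det = -1 ∧
      Matrix.trace (g : Matrix (Fin 2) (Fin 2) (ZMod p)) = 0 ∧
      ∃ v : Fin 2 → ZMod p, v ≠ 0 ∧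
        Matrix.mulVec (g : Matrix (Fin 2) (Fin 2) (ZMod p)) v = v)
    (hord : p ∣ Nat.card G)
    (htri : ∀ g ∈ G, (g : Matrix (Fin 2) (Fin 2) (ZMod p)) 1 0 = 0) :
    p = 2 ∧
      G = Subgroup.closure
        {g : GL (Fin 2) (ZMod p) |
          (g : Matrix (Fin 2) (Fin 2) (ZMod p)) = !![1, 1; 0, 1]} :=
  nilpotent_admissible_borel_subgroup_GL2_general p hp G hnil hdet hord htri
end

section
/- Let p be a prime, let k ≥ 2 be an integer, and let φ, δ be integers. For a positive integer N, let C(N) be the set of invertible 2×2 matrices over ℤ/Nℤ of the form [[a + bφ, b],[δb, a]] with a, b ∈ ℤ/Nℤ (where φ, δ are reduced modulo N), i.e., those with a² + abφ − δb² a unit of ℤ/Nℤ. Then the cardinality of C(p^k) equals p^{2(k−1)} times the cardinality of C(p). -/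
/-!
Reduction modulo `p` is a surjective ring homomorphism `ℤ/p^kℤ → ℤ/pℤ` that reflects units
(an integer prime to `p` is prime to `p^k`). Hence the pairs `(a, b)` with `a² + abφ - δb²` a
unit at level `p^k` are exactly the preimage of those at level `p` under coordinatewise
reduction. Each fibre of this additive surjection is a coset of its kernel, which has
`(p^k / p)² = p^(2(k-1))` elements.
-/

open Matrix

/-- The level-`N` Cartan subgroup attached to integer parameters `φ, δ`: the set of
invertible `2×2` matrices over `ℤ/Nℤ` of the form `[[a + bφ, b], [δb, a]]`, i.e. those with
`a² + abφ - δb²` a unit of `ℤ/Nℤ`. -/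
def cartanSet (φ δ : ℤ) (N : ℕ) : Set (Matrix (Fin 2) (Fin 2) (ZMod N)) :=
  {A | ∃ a b : ZMod N,
    A = !![a + b * (φ : ZMod N), b; (δ : ZMod N) * b, a] ∧
      IsUnit (a ^ 2 + a * b * (φ : ZMod N) - (δ : ZMod N) * b ^ 2)}

open Function

theorem AddMonoidHom.card_preimage_eq_card_mul_card_ker {G H F : Type*} [AddGroup G]
    [AddGroup H] [FunLike F G H] [AddMonoidHomClass F G H] [Finite G] {f : F}
    (hf : Surjective f) (s : Set H) :
    Nat.card (f ⁻¹' s) = Nat.card s * Nat.card (f : G →+ H).ker := by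
  have : Finite H := Finite.of_surjective f hf
  obtain ⟨t, rfl⟩ := s.toFinite.exists_finset_coe
  rw [Finset.card_preimage_eq_sum_card_image_eq fun _ _ ↦ Set.toFinite _, Nat.card_coe_set_eq,
    Set.ncard_coe_finset, ← smul_eq_mul, ← Finset.sum_const]
  exact Finset.sum_congr rfl fun b _ ↦
    Nat.card_congr (AddMonoidHom.fiberEquivKerOfSurjective (f := (f : G →+ H)) hf b)

namespace ZMod

variable {p : ℕ} [NeZero p] {k : ℕ} (hk : k ≠ 0)

theorem isLocalHom_castHom_pow : IsLocalHom (castHom (dvd_pow_self p hk) (ZMod p)) := by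
  refine ⟨fun x hx ↦ ?_⟩
  obtain ⟨m, rfl⟩ := natCast_zmod_surjective x
  rw [map_natCast, isUnit_iff_coprime] at hx
  rwa [isUnit_iff_coprime, Nat.coprime_pow_right_iff (Nat.pos_of_ne_zero hk)]

theorem card_ker_prodMap_castHom_pow :
    Nat.card ((castHom (dvd_pow_self p hk) (ZMod p)).prodMap (castHom (dvd_pow_self p hk) (ZMod p))
      : ZMod (p ^ k) × ZMod (p ^ k) →+ ZMod p × ZMod p).ker = p ^ (2 * (k - 1)) := by
  set π := castHom (dvd_pow_self p hk) (ZMod p)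
  have hπ : Surjective π := castHom_surjective _
  have h := AddMonoidHom.card_preimage_eq_card_mul_card_ker (f := π.prodMap π)
    (by simpa only [RingHom.coe_prodMap] using hπ.prodMap hπ) Set.univ
  simp only [Set.preimage_univ, Nat.card_univ, Nat.card_prod, Nat.card_zmod] at h
  refine Nat.eq_of_mul_eq_mul_left (Nat.pos_of_ne_zero (NeZero.ne (p * p))) ?_
  rw [← h, ← pow_add, ← sq, ← pow_add]
  congr 1
  omega

end ZMod

def cartanPairs {R : Type*} [CommRing R] (φ δ : R) : Set (R × R) :=
  {x | IsUnit (x.1 ^ 2 + x.1 * x.2 * φ - δ * x.2 ^ 2)}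

theorem preimage_cartanPairs {R S : Type*} [CommRing R] [CommRing S] (f : R →+* S)
    [IsLocalHom f] (φ δ : R) :
    Prod.map f f ⁻¹' cartanPairs (f φ) (f δ) = cartanPairs φ δ := by
  ext x
  simp only [cartanPairs, Set.mem_preimage, Set.mem_ofPred_eq, Prod.map_fst, Prod.map_snd,
    ← map_pow, ← map_mul, ← map_add, ← map_sub, isUnit_map_iff]

theorem cartanSet_eq_image (φ δ : ℤ) (N : ℕ) :
    cartanSet φ δ N = (fun x : ZMod N × ZMod N ↦ !![x.1 + x.2 * (φ : ZMod N), x.2;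
      (δ : ZMod N) * x.2, x.1]) '' cartanPairs (φ : ZMod N) δ := by
  ext A
  constructor
  · rintro ⟨a, b, rfl, h⟩
    exact ⟨(a, b), h, rfl⟩
  · rintro ⟨⟨a, b⟩, h, rfl⟩
    exact ⟨a, b, rfl, h⟩

theorem card_cartanSet (φ δ : ℤ) (N : ℕ) :
    Nat.card (cartanSet φ δ N) = Nat.card (cartanPairs (φ : ZMod N) δ) := by
  rw [cartanSet_eq_image]
  refine Nat.card_image_of_injective (fun x y h ↦ Prod.ext ?_ ?_) _
  · simpa using congrFun₂ h 1 1
  · simpa using congrFun₂ h 0 1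

/-- For a prime `p` and `k ≥ 2`, the level-`p^k` Cartan subgroup has cardinality
`p^(2(k-1))` times that of the level-`p` Cartan subgroup. -/
theorem card_cartanSet_prime_pow (p : ℕ) (hp : p.Prime) (k : ℕ) (hk : 2 ≤ k) (φ δ : ℤ) :
    Nat.card (cartanSet φ δ (p ^ k)) = p ^ (2 * (k - 1)) * Nat.card (cartanSet φ δ p) := by
  have : NeZero p := ⟨hp.ne_zero⟩
  have hk0 : k ≠ 0 := by omega
  set π := ZMod.castHom (dvd_pow_self p hk0) (ZMod p)
  have : IsLocalHom π := ZMod.isLocalHom_castHom_pow hk0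
  have hπ : Surjective π := ZMod.castHom_surjective _
  have hpre := preimage_cartanPairs π φ δ
  rw [map_intCast, map_intCast] at hpre
  rw [card_cartanSet, card_cartanSet, ← hpre, ← RingHom.coe_prodMap,
    AddMonoidHom.card_preimage_eq_card_mul_card_ker (hπ.prodMap hπ),
    ZMod.card_ker_prodMap_castHom_pow hk0, mul_comm]
end
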